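/- Let X ⊂ P^n be an irreducible hypersurface over ℂ of degree d with n ≥ 2d. Then any two points of X can be joined by a connected chain of two lines contained in X. -/

import Mathlib

open MvPolynomial

noncomputable section

/-- Complex projective `n`-space, as the projectivization of `ℂ^{n+1}`. -/
abbrev Pn (n : ℕ) := Projectivization ℂ (Fin (n + 1) → ℂ)

/-- The common zero locus in `ℙ^n` of a set of polynomials: the points all of whose
homogeneous representatives are zeros of every polynomial in the set. -/
def algZeroLocus (n : ℕ) (F : Set (MvPolynomial (Fin (n + 1)) ℂ)) : Set (Pn n) :=
  {p | ∀ f ∈ F, ∀ v : Fin (n + 1) → ℂ, v ∈ Projectivization.submodule p → eval v f = 0}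

/-- A subset of `ℙ^n` is (Zariski-)closed if it is the common zero locus of a set of
polynomials. -/
def IsAlgClosedSet (n : ℕ) (S : Set (Pn n)) : Prop :=
  ∃ F, S = algZeroLocus n F

/-- A subset of `ℙ^n` is an irreducible variety if it is nonempty and cannot be covered by
two closed sets without being contained in one of them. -/
def IsIrrVariety (n : ℕ) (S : Set (Pn n)) : Prop :=
  S.Nonempty ∧ ∀ C₁ C₂ : Set (Pn n), IsAlgClosedSet n C₁ → IsAlgClosedSet n C₂ →
    S ⊆ C₁ ∪ C₂ → S ⊆ C₁ ∨ S ⊆ C₂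

/-- The dimension of a subset of `ℙ^n`: the supremum of lengths of strictly increasing chains
of irreducible closed subvarieties contained in it. -/
def algDim (n : ℕ) (S : Set (Pn n)) : ℕ∞ :=
  sSup {m : ℕ∞ | ∃ k : ℕ, m = (k : ℕ∞) ∧ ∃ c : Fin (k + 1) → Set (Pn n),
    StrictMono c ∧ ∀ i, IsAlgClosedSet n (c i) ∧ IsIrrVariety n (c i) ∧ c i ⊆ S}

/-- The projective line (or point) spanned by two points of `ℙ^n`. -/
def lineThrough (n : ℕ) (p q : Pn n) : Set (Pn n) :=
  {x | Projectivization.submodule x ≤ Projectivization.submodule p ⊔ Projectivization.submodule q}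

/-- A line in `ℙ^n`: the projectivization of a 2-dimensional linear subspace. -/
def IsLine (n : ℕ) (l : Set (Pn n)) : Prop :=
  ∃ W : Submodule ℂ (Fin (n + 1) → ℂ), Module.finrank ℂ W = 2 ∧
    l = {x | Projectivization.submodule x ≤ W}

/-- The linear span in `ℙ^n` of an effective divisor (a multiset of points). -/
def linSpan (n : ℕ) (D : Multiset (Pn n)) : Set (Pn n) :=
  {x | Projectivization.submodule x ≤
    Submodule.span ℂ (⋃ p ∈ {p : Pn n | p ∈ D}, (Projectivization.submodule p : Set (Fin (n + 1) → ℂ)))}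

/-- The `r`-th secant variety of a subset `C` of `ℙ^n`: the union of the linear spans of all
effective divisors of degree `r` supported on `C`. -/
def secantVariety (n : ℕ) (r : ℕ) (C : Set (Pn n)) : Set (Pn n) :=
  ⋃ D ∈ {D : Multiset (Pn n) | Multiset.card D = r ∧ ∀ p ∈ D, p ∈ C}, linSpan n D

end

/-!
Given `p, q ∈ X`, we look for a point `r` such that the lines `pr` and `qr` lie in `X`.
Write `F (x + t • u) = ∑ⱼ tʲ Pⱼ(u; x)`, with `Pⱼ(u; ·)` homogeneous of degree `d - j`; since
`P_d(p; ·) = F (p) = 0`, the line `pr` lies in `X` as soon as `Pⱼ(p; r) = 0` for all `j < d`.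
The polar systems of `p` and `q` share the equation `P₀ = F`, so together with one linear
equation keeping `r` off `p` and `q` they form `2 d` equations in `n + 1 > 2 d` unknowns, all
vanishing at the origin. Such a system has another solution: if the origin were its only zero,
then by the Nullstellensatz (and translation) every maximal ideal of `ℂ[x₀, …, xₙ]` would be
minimal over an ideal with `2 d` generators, and Krull's height theorem would bound the
dimension `n + 1` of that ring by `2 d`.
-/

namespace MvPolynomial

section AffineDimension

variable {k σ : Type*} [Field k]

lemma zeroLocus_span_image_translate (s : Set (MvPolynomial σ k)) (c : σ → k) :
    zeroLocus k (Ideal.span ((bind₁ fun i => X i + C (c i)) '' s)) =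
      (· + c) ⁻¹' zeroLocus k (Ideal.span s) := by
  ext x
  simp [zeroLocus_span, -aeval_eq_eval, aeval_bind₁]
  rfl

variable [IsAlgClosed k] [Finite σ]

lemma height_vanishingIdeal_le_card_of_zeroLocus_eq {s : Finset (MvPolynomial σ k)} {a : σ → k}
    (h : zeroLocus k (Ideal.span (s : Set (MvPolynomial σ k))) = {a}) :
    (vanishingIdeal k {a}).height ≤ s.card := by
  apply Ideal.height_le_card_of_mem_minimalPrimes_span_finset
  rw [← Ideal.radical_minimalPrimes, ← vanishingIdeal_zeroLocus_eq_radical (K := k), h,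
    Ideal.minimalPrimes_eq_subsingleton_self]
  rfl

theorem zeroLocus_span_ne_singleton {s : Finset (MvPolynomial σ k)} (hs : s.card < Nat.card σ)
    (a : σ → k) : zeroLocus k (Ideal.span (s : Set (MvPolynomial σ k))) ≠ {a} := by
  classical
  intro h
  have hdim : ringKrullDim (MvPolynomial σ k) ≤ s.card := by
    rw [ringKrullDim_le_iff_isMaximal_height_le]
    intro m hm
    obtain ⟨b, rfl⟩ := eq_vanishingIdeal_singleton_of_isMaximal k hm
    have hb : zeroLocus k (Ideal.span ((s.image (bind₁ fun i => X i + C ((a - b) i)) :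
        Finset _) : Set (MvPolynomial σ k))) = {b} := by
      rw [Finset.coe_image, zeroLocus_span_image_translate, h]
      ext x
      exact ⟨fun hx => by simpa using congrArg (· - (a - b)) hx, fun hx => by simp [hx]⟩
    exact_mod_cast (height_vanishingIdeal_le_card_of_zeroLocus_eq hb).trans
      (by exact_mod_cast Finset.card_image_le)
  rw [ringKrullDim_of_isNoetherianRing, ringKrullDim_eq_zero_of_field, zero_add] at hdim
  exact absurd hdim (by exact_mod_cast hs.not_ge)

theorem exists_ne_zero_forall_eval_eq_zero (s : Finset (MvPolynomial σ k))
    (hs : s.card < Nat.card σ) (h0 : ∀ f ∈ s, eval 0 f = 0) :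
    ∃ w ≠ 0, ∀ f ∈ s, eval w f = 0 := by
  by_contra! h
  apply zeroLocus_span_ne_singleton hs 0
  ext w
  simp only [zeroLocus_span, Set.mem_ofPred_eq, Set.mem_singleton_iff, Finset.mem_coe,
    aeval_eq_eval]
  refine ⟨fun hw => ?_, fun hw => hw ▸ h0⟩
  by_contra hw0
  obtain ⟨f, hf, hfw⟩ := h w hw0
  exact hfw (hw f hf)

end AffineDimension

section Eval

variable {R σ : Type*} [CommSemiring R] [Fintype σ] {g : MvPolynomial σ R} {m : ℕ}

lemma IsHomogeneous.eval_smul (hg : g.IsHomogeneous m) (b : R) (w : σ → R) :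
    eval (b • w) g = b ^ m * eval w g := by
  rw [eval_eq', eval_eq', Finset.mul_sum]
  refine Finset.sum_congr rfl fun a ha => ?_
  have hdeg : ∑ i, a i = m := by
    rw [← Finsupp.degree_eq_sum, Finsupp.degree_eq_weight_one]
    exact hg (mem_support_iff.1 ha)
  simp only [Pi.smul_apply, smul_eq_mul, mul_pow, Finset.prod_mul_distrib,
    Finset.prod_pow_eq_pow_sum, hdeg]
  ring

lemma IsHomogeneous.eval_zero (hg : g.IsHomogeneous m) (hm : m ≠ 0) : eval 0 g = 0 := by
  simpa [zero_pow hm] using hg.eval_smul 0 0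

lemma exists_eval_eq_dual (φ : Module.Dual R (σ → R)) :
    ∃ L : MvPolynomial σ R, ∀ v, eval v L = φ v := by
  classical
  exact ⟨∑ i, C (φ fun j => if i = j then 1 else 0) * X i, fun v => by
    simp [LinearMap.pi_apply_eq_sum_univ φ v, mul_comm]⟩

end Eval

section Polar

variable {R : Type*} [CommSemiring R] {N : ℕ}

/-- `F (x + t • u)` as a polynomial in `t`: substitute `xᵢ ↦ yᵢ₊₁ + uᵢ y₀` into `R[y₀, …, y_N]`
and read the result as a polynomial in `y₀` over `R[y₁, …, y_N] ≅ R[x₀, …, x_{N-1}]`. -/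
noncomputable def taylorAlong (u : Fin N → R) (F : MvPolynomial (Fin N) R) :
    Polynomial (MvPolynomial (Fin N) R) :=
  finSuccEquiv R N (bind₁ (fun i => X i.succ + C (u i) * X 0) F)

/-- The `j`-th polar of `F` at `u`, normalised as the coefficient of `tʲ` in `F (x + t • u)`
(in characteristic zero, `(u ⬝ ∇)ʲ F / j!`). -/
noncomputable def polar (u : Fin N → R) (F : MvPolynomial (Fin N) R) (j : ℕ) :
    MvPolynomial (Fin N) R :=
  (taylorAlong u F).coeff j

variable {u : Fin N → R} {F : MvPolynomial (Fin N) R} {d : ℕ}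

lemma eval_taylorAlong (u w : Fin N → R) (F : MvPolynomial (Fin N) R) (s : R) :
    ((taylorAlong u F).map (eval w)).eval s = eval (w + s • u) F := by
  rw [taylorAlong, ← eval_eq_eval_mv_eval', ← aeval_eq_eval, aeval_bind₁, aeval_eq_eval]
  congr 2
  funext i
  simp [mul_comm]

lemma isHomogeneous_bind₁_shift (hF : F.IsHomogeneous d) :
    (bind₁ (fun i : Fin N => X i.succ + C (u i) * X (0 : Fin (N + 1))) F).IsHomogeneous d := by
  simpa [← aeval_eq_bind₁] using
    hF.aeval _ fun i => (isHomogeneous_X _ _).add (isHomogeneous_C_mul_X _ _)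

lemma isHomogeneous_polar (hF : F.IsHomogeneous d) {j : ℕ} (hj : j ≤ d) :
    (polar u F j).IsHomogeneous (d - j) :=
  (isHomogeneous_bind₁_shift hF).finSuccEquiv_coeff_isHomogeneous j (d - j) (by omega)

lemma polar_eq_zero_of_lt (hF : F.IsHomogeneous d) {j : ℕ} (hj : d < j) : polar u F j = 0 := by
  ext m
  rw [polar, taylorAlong, finSuccEquiv_coeff_coeff, coeff_zero]
  apply (isHomogeneous_bind₁_shift hF).coeff_eq_zero
  simp [Finsupp.degree_eq_sum, Fin.sum_univ_succ]
  omega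

lemma eval_add_smul_eq_sum_polar (hF : F.IsHomogeneous d) (w : Fin N → R) (s : R) :
    eval (w + s • u) F = ∑ j ∈ Finset.range (d + 1), eval w (polar u F j) * s ^ j := by
  have hdeg : ((taylorAlong u F).map (eval w)).natDegree < d + 1 := by
    refine Nat.lt_succ_of_le (Polynomial.natDegree_le_iff_coeff_eq_zero.2 fun j hj => ?_)
    rw [Polynomial.coeff_map, ← polar, polar_eq_zero_of_lt hF (by omega), map_zero]
  rw [← eval_taylorAlong, Polynomial.eval_eq_sum_range' hdeg]
  simp [Polynomial.coeff_map, polar]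

lemma eval_polar_zero (w : Fin N → R) : eval w (polar u F 0) = eval w F := by
  have h := eval_taylorAlong u w F 0
  rwa [zero_smul, add_zero, ← Polynomial.coeff_zero_eq_eval_zero, Polynomial.coeff_map] at h

lemma eval_polar_self (hF : F.IsHomogeneous d) (w : Fin N → R) :
    eval w (polar u F d) = eval u F := by
  have hconst : eval w (polar u F d) = eval 0 (polar u F d) := by
    simpa using ((isHomogeneous_polar hF le_rfl).eval_smul 0 w).symm
  rw [hconst, ← zero_add u, ← one_smul R u, eval_add_smul_eq_sum_polar hF,
    Finset.sum_eq_single d]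
  · simp
  · intro j hj hjd
    have hjd : j < d := by rw [Finset.mem_range] at hj; omega
    rw [(isHomogeneous_polar hF hjd.le).eval_zero (by omega), zero_mul]
  · simp

lemma eval_smul_add_smul_eq_zero_of_polar (hF : F.IsHomogeneous d) (hu : eval u F = 0)
    {w : Fin N → R} (hw : ∀ j < d, eval w (polar u F j) = 0) (a b : R) :
    eval (a • u + b • w) F = 0 := by
  rw [add_comm, eval_add_smul_eq_sum_polar hF]
  refine Finset.sum_eq_zero fun j hj => ?_
  rcases (Finset.mem_range_succ_iff.1 hj).lt_or_eq with hjd | rfl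
  · rw [(isHomogeneous_polar hF hjd.le).eval_smul, hw j hjd, mul_zero, zero_mul]
  · rw [eval_polar_self hF, hu, zero_mul]

end Polar

end MvPolynomial

namespace Projectivization

variable {K V : Type*} [Field K] [AddCommGroup V] [Module K V]

lemma exists_dual_rep_eq_one (p q : Projectivization K V) :
    ∃ φ : Module.Dual K V, φ p.rep = 1 ∧ φ q.rep = 1 := by
  obtain ⟨φ, hφ⟩ := Module.exists_dual_forall_apply_eq_one (p.linearIndepOn_pair q)
  exact ⟨φ, hφ _ (Set.mem_insert _ _), hφ _ (Set.mem_insert_of_mem _ rfl)⟩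

lemma ne_mk_of_dual_eq_zero {φ : Module.Dual K V} {p : Projectivization K V}
    (hp : φ p.rep ≠ 0) {w : V} (hw0 : w ≠ 0) (hw : φ w = 0) : p ≠ mk K w hw0 := by
  rintro rfl
  obtain ⟨a, ha⟩ := exists_smul_eq_mk_rep K w hw0
  rw [← ha, Units.smul_def, map_smul, hw, smul_zero] at hp
  exact hp rfl

end Projectivization

open Projectivization

section Lines

variable {n : ℕ}

lemma isLine_lineThrough {p q : Pn n} (hpq : p ≠ q) : IsLine n (lineThrough n p q) := by
  refine ⟨p.submodule ⊔ q.submodule, ?_, rfl⟩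
  rw [submodule_eq, submodule_eq, ← Submodule.span_insert, ← Matrix.range_cons_cons_empty,
    finrank_span_eq_card (linearIndependent_pair_iff_ne.2 hpq), Fintype.card_fin]

lemma mem_lineThrough_left (p q : Pn n) : p ∈ lineThrough n p q :=
  (le_sup_left : p.submodule ≤ _)

lemma mem_lineThrough_right (p q : Pn n) : q ∈ lineThrough n p q :=
  (le_sup_right : q.submodule ≤ _)

variable {F : MvPolynomial (Fin (n + 1)) ℂ}

lemma eval_rep_eq_zero_of_mem_algZeroLocus {p : Pn n} (hp : p ∈ algZeroLocus n {F}) :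
    eval p.rep F = 0 :=
  hp F rfl p.rep (p.submodule_eq ▸ Submodule.mem_span_singleton_self _)

lemma lineThrough_mk_subset_algZeroLocus {u w : Fin (n + 1) → ℂ} (hu : u ≠ 0) (hw : w ≠ 0)
    (h : ∀ a b : ℂ, eval (a • u + b • w) F = 0) :
    lineThrough n (mk ℂ u hu) (mk ℂ w hw) ⊆ algZeroLocus n {F} := by
  rintro x hx f rfl v hv
  have hv' := hx hv
  rw [submodule_mk, submodule_mk, ← Submodule.span_insert, Submodule.mem_span_pair] at hv'
  obtain ⟨a, b, rfl⟩ := hv'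
  exact h a b

lemma lineThrough_subset_algZeroLocus_of_polar {d : ℕ} (hF : F.IsHomogeneous d) {p : Pn n}
    (hp : p ∈ algZeroLocus n {F}) {w : Fin (n + 1) → ℂ} (hw0 : w ≠ 0)
    (hw : ∀ j < d, eval w (polar p.rep F j) = 0) :
    lineThrough n p (mk ℂ w hw0) ⊆ algZeroLocus n {F} := by
  simpa using lineThrough_mk_subset_algZeroLocus p.rep_nonzero hw0
    (eval_smul_add_smul_eq_zero_of_polar hF (eval_rep_eq_zero_of_mem_algZeroLocus hp) hw)

/-- The two polar systems share their equation `polar _ F 0 = F`, so together with `φ = 0` they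
are `2 d` equations in `n + 1` unknowns. -/
lemma exists_common_zero_polar {d : ℕ} (hd : 1 ≤ d) (hn : 2 * d ≤ n) (hF : F.IsHomogeneous d)
    (u v : Fin (n + 1) → ℂ) (φ : Module.Dual ℂ (Fin (n + 1) → ℂ)) :
    ∃ w ≠ 0, (∀ j < d, eval w (polar u F j) = 0) ∧ (∀ j < d, eval w (polar v F j) = 0) ∧
      φ w = 0 := by
  classical
  obtain ⟨L, hL⟩ := exists_eval_eq_dual φ
  let s := (Finset.range d).image (polar u F) ∪ (Finset.Ico 1 d).image (polar v F) ∪ {L}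
  have hs : s.card < Nat.card (Fin (n + 1)) :=
    calc s.card ≤ (Finset.range d).card + (Finset.Ico 1 d).card + 1 :=
          (Finset.card_union_le _ _).trans (add_le_add ((Finset.card_union_le _ _).trans
            (add_le_add Finset.card_image_le Finset.card_image_le)) (Finset.card_singleton L).le)
      _ < Nat.card (Fin (n + 1)) := by simp; omega
  have h0 : ∀ f ∈ s, eval 0 f = 0 := by
    intro f hf
    simp only [s, Finset.mem_union, Finset.mem_image, Finset.mem_range, Finset.mem_Ico,
      Finset.mem_singleton] at hf
    rcases hf with (⟨j, hj, rfl⟩ | ⟨j, hj, rfl⟩) | rfl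
    · exact (isHomogeneous_polar hF hj.le).eval_zero (by omega)
    · exact (isHomogeneous_polar hF hj.2.le).eval_zero (by omega)
    · rw [hL, map_zero]
  obtain ⟨w, hw0, hw⟩ := exists_ne_zero_forall_eval_eq_zero s hs h0
  have hwu : ∀ j < d, eval w (polar u F j) = 0 := fun j hj =>
    hw _ (Finset.mem_union_left _ (Finset.mem_union_left _
      (Finset.mem_image_of_mem _ (Finset.mem_range.2 hj))))
  refine ⟨w, hw0, hwu, fun j hj => ?_,
    hL w ▸ hw L (Finset.mem_union_right _ (Finset.mem_singleton_self L))⟩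
  rcases Nat.eq_zero_or_pos j with rfl | hj0
  · rw [eval_polar_zero, ← eval_polar_zero (u := u)]
    exact hwu 0 hj
  · exact hw _ (Finset.mem_union_left _ (Finset.mem_union_right _
      (Finset.mem_image_of_mem _ (Finset.mem_Ico.2 ⟨hj0, hj⟩))))

end Lines

theorem stmt11_general (n d : ℕ) (hd : 1 ≤ d) (hn : 2 * d ≤ n) (F : MvPolynomial (Fin (n + 1)) ℂ)
    (hF : F.IsHomogeneous d)
    (X : Set (Pn n)) (hX : X = algZeroLocus n {F}) :
    ∀ p ∈ X, ∀ q ∈ X,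
      ∃ l₁ l₂ : Set (Pn n), IsLine n l₁ ∧ IsLine n l₂ ∧ l₁ ⊆ X ∧ l₂ ⊆ X ∧
        p ∈ l₁ ∧ q ∈ l₂ ∧ (l₁ ∩ l₂).Nonempty := by
  intro p hp q hq
  subst hX
  obtain ⟨φ, hφp, hφq⟩ := exists_dual_rep_eq_one p q
  obtain ⟨w, hw0, hwp, hwq, hφw⟩ := exists_common_zero_polar hd hn hF p.rep q.rep φ
  have hpr := ne_mk_of_dual_eq_zero (p := p) (hφp ▸ one_ne_zero) hw0 hφw
  have hqr := ne_mk_of_dual_eq_zero (p := q) (hφq ▸ one_ne_zero) hw0 hφw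
  exact ⟨_, _, isLine_lineThrough hpr, isLine_lineThrough hqr,
    lineThrough_subset_algZeroLocus_of_polar hF hp hw0 hwp,
    lineThrough_subset_algZeroLocus_of_polar hF hq hw0 hwq,
    mem_lineThrough_left _ _, mem_lineThrough_left _ _,
    mk ℂ w hw0, mem_lineThrough_right _ _, mem_lineThrough_right _ _⟩

/-- Let `X ⊂ ℙ^n` be an irreducible hypersurface of degree `d` over `ℂ` with `n ≥ 2d`.
Then any two points of `X` can be joined by a connected chain of two lines contained
in `X`. -/
theorem stmt11 (n d : ℕ) (hd : 1 ≤ d) (hn : 2 * d ≤ n) (F : MvPolynomial (Fin (n + 1)) ℂ)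
    (hF : F.IsHomogeneous d) (hF0 : F ≠ 0)
    (X : Set (Pn n)) (hX : X = algZeroLocus n {F}) (hXirr : IsIrrVariety n X) :
    ∀ p ∈ X, ∀ q ∈ X,
      ∃ l₁ l₂ : Set (Pn n), IsLine n l₁ ∧ IsLine n l₂ ∧ l₁ ⊆ X ∧ l₂ ⊆ X ∧
        p ∈ l₁ ∧ q ∈ l₂ ∧ (l₁ ∩ l₂).Nonempty :=
  stmt11_general n d hd hn F hF X hX
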